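/- Let F be a field and h ∈ F[x]. If f ∈ F[x] divides h·f' (where f' is the formal derivative), then f = u₁^{β₁}⋯u_ℓ^{β_ℓ}·w, where u₁,…,u_ℓ are the distinct monic prime factors of h with nonzero derivative, βᵢ ≥ 0, and w ∈ F[x] satisfies w' = 0. -/

import Mathlib

open Polynomial UniqueFactorizationMonoid

private lemma deriv_prod_zero {F : Type} [Field F] (s : Finset (Polynomial F))
    (g : Polynomial F → Polynomial F) (hg : ∀ i ∈ s, Polynomial.derivative (g i) = 0) :
    Polynomial.derivative (∏ i ∈ s, g i) = 0 := by
  classical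
  induction s using Finset.induction with
  | empty => simp
  | @insert a s hni ih =>
    rw [Finset.prod_insert hni, Polynomial.derivative_mul,
      hg a (Finset.mem_insert_self a s), ih (fun i hi => hg i (Finset.mem_insert_of_mem hi))]
    simp

/-- If `f ∈ F[x]` divides `h·f'`, then `f = w · ∏_{u ∈ S} u^{β_u}` where `S` is a set of
distinct monic prime factors of `h` with nonzero derivative, `β_u ≥ 0`, and `w' = 0`. -/
theorem stmt14 (F : Type) [Field F] (h f : F[X]) (hdvd : f ∣ h * derivative f) :
    ∃ (S : Finset F[X]) (β : F[X] → ℕ) (w : F[X]),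
      (∀ u ∈ S, u.Monic ∧ Irreducible u ∧ u ∣ h ∧ derivative u ≠ 0) ∧
      derivative w = 0 ∧ f = w * ∏ u ∈ S, u ^ β u := by
  classical
  rcases eq_or_ne f 0 with rfl | hf0
  · exact ⟨∅, fun _ => 0, 0, by simp, by simp, by simp⟩
  set M := normalizedFactors f with hM
  set T := M.toFinset with hT
  have key : ∀ p ∈ T, derivative p ≠ 0 → ¬ p ∣ h → derivative (p ^ M.count p) = 0 := by
    intro p hpT hp' hph
    have hpM : p ∈ M := Multiset.mem_toFinset.mp hpT
    have hirr : Irreducible p := irreducible_of_normalized_factor p hpM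
    have hnorm : normalize p = p := normalize_normalized_factor p hpM
    have hprime : Prime p := prime_of_normalized_factor p hpM
    set e := M.count p with he
    have hemul : emultiplicity p f = e := by
      rw [emultiplicity_eq_count_normalizedFactors hirr hf0, hnorm]
    have hpe : p ^ e ∣ f := pow_dvd_of_le_emultiplicity hemul.ge
    have hpe1 : ¬ p ^ (e+1) ∣ f := by
      apply not_pow_dvd_of_emultiplicity_lt
      rw [hemul]; exact_mod_cast Nat.lt_succ_self e
    rw [derivative_pow]
    suffices hc : (e : F) = 0 by rw [hc]; simp
    by_contra hcne
    have hene : e ≠ 0 := fun h0 => hcne (by rw [h0]; simp)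
    obtain ⟨g, hg⟩ := hpe
    have hpg : ¬ p ∣ g := by
      intro hd
      exact hpe1 (by rw [hg, pow_succ]; exact mul_dvd_mul_left _ hd)
    have hfd : derivative f = p ^ (e-1) * (C (e:F) * derivative p * g) + p ^ e * derivative g := by
      conv_lhs => rw [hg]
      rw [derivative_mul, derivative_pow]
      have : p ^ (e - 1 + 1) = p ^ e := by congr 1; omega
      rw [← this]; ring
    have h3 : p ^ e ∣ p ^ (e-1) * (C (e:F) * derivative p * g * h) := by
      have h2 : p ^ e ∣ h * derivative f := dvd_trans ⟨g, hg⟩ hdvd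
      have h4 : p ^ e ∣ p ^ e * (derivative g * h) := dvd_mul_right _ _
      have h5 := dvd_sub h2 h4
      have heq : h * derivative f - p ^ e * (derivative g * h)
          = p ^ (e-1) * (C (e:F) * derivative p * g * h) := by rw [hfd]; ring
      rwa [heq] at h5
    have h6 : p ∣ C (e:F) * derivative p * g * h := by
      have hpe' : p ^ e = p ^ (e-1) * p := by
        rw [← pow_succ]; congr 1; omega
      rw [hpe'] at h3
      exact (mul_dvd_mul_iff_left (pow_ne_zero _ hprime.ne_zero)).mp h3
    rcases hprime.dvd_mul.mp h6 with h7 | h7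
    · rcases hprime.dvd_mul.mp h7 with h8 | h8
      · rcases hprime.dvd_mul.mp h8 with h9 | h9
        · exact hirr.not_isUnit (isUnit_of_dvd_unit h9 (isUnit_C.mpr (isUnit_iff_ne_zero.mpr hcne)))
        · exact absurd (degree_le_of_dvd h9 hp') (not_le.mpr (degree_derivative_lt hprime.ne_zero))
      · exact hpg h8
    · exact hph h7
  obtain ⟨u, hu⟩ := prod_normalizedFactors hf0
  have hu' : derivative (u : F[X]) = 0 := by
    obtain ⟨c, -, hc⟩ := Polynomial.isUnit_iff.mp u.isUnit
    rw [← hc]; simp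
  refine ⟨T.filter (fun p => derivative p ≠ 0 ∧ p ∣ h), fun p => M.count p,
    (u : F[X]) * ∏ p ∈ T.filter (fun p => ¬(derivative p ≠ 0 ∧ p ∣ h)), p ^ M.count p,
    ?_, ?_, ?_⟩
  · intro p hp
    simp only [Finset.mem_filter] at hp
    obtain ⟨hpT, hp', hph⟩ := hp
    have hpM := Multiset.mem_toFinset.mp hpT
    have hirr := irreducible_of_normalized_factor p hpM
    have hmon : p.Monic := by
      have := Polynomial.monic_normalize (p := p) hirr.ne_zero
      rwa [normalize_normalized_factor p hpM] at this
    exact ⟨hmon, hirr, hph, hp'⟩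
  · rw [derivative_mul, hu', zero_mul, zero_add]
    have hz : derivative (∏ p ∈ T.filter (fun p => ¬(derivative p ≠ 0 ∧ p ∣ h)),
        p ^ M.count p) = 0 := by
      apply deriv_prod_zero
      intro p hp
      simp only [Finset.mem_filter] at hp
      obtain ⟨hpT, hcond⟩ := hp
      have : derivative (p ^ M.count p) = 0 := by
        by_cases hdp : derivative p = 0
        · rw [derivative_pow, hdp, mul_zero]
        · exact key p hpT hdp (fun hh => hcond ⟨hdp, hh⟩)
      exact this
    rw [hz, mul_zero]
  · rw [← hu, Finset.prod_multiset_count, ← hT,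
      ← Finset.prod_filter_mul_prod_filter_not T (fun p => derivative p ≠ 0 ∧ p ∣ h)
        (fun p => p ^ M.count p)]
    ring
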